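/- Let f = Φa + w where a is k-sparse with least-magnitude nonzero entry a_min, ‖w‖_2 ≤ ε, and √(1−δ_k)|a_min| > ε. If t > (ν_k|a_min| + ε)/(√(1−δ_k)|a_min| − ε), then for every i outside supp(a): |⟨f, φ_i⟩| < t·‖f‖_2. (Thresholding never selects an incorrect atom.) -/

import Mathlib

/-!
Write `f = Φa + w`. For an atom `φᵢ` outside the support, `⟨Φa, φᵢ⟩ = ∑_{j ∈ Λ} aⱼ ⟨φᵢ, φⱼ⟩`, so
Cauchy–Schwarz and the 2-coherence give `|⟨f, φᵢ⟩| ≤ ν‖a‖ + ε`, while the lower RIP bound gives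
`‖f‖ ≥ √(1-δ)‖a‖ - ε`. The threshold condition is exactly `ν a_min + ε < t (√(1-δ) a_min - ε)`;
since `t √(1-δ) > ν`, this inequality persists when `a_min` is replaced by `‖a‖ ≥ a_min`.
-/

open Finset

lemma abs_sum_mul_le_sqrt_mul_sqrt {ι : Type*} (s : Finset ι) (f g : ι → ℝ) :
    |∑ i ∈ s, f i * g i| ≤ √(∑ i ∈ s, f i ^ 2) * √(∑ i ∈ s, g i ^ 2) := by
  refine (abs_sum_le_sum_abs _ _).trans ?_
  simpa only [abs_mul, sq_abs] using Real.sum_mul_le_sqrt_mul_sqrt s (|f ·|) (|g ·|)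

section SumOfSquares

variable {ι : Type*} [Fintype ι]

lemma sqrt_sum_sq_eq_norm (v : ι → ℝ) : √(∑ i, v i ^ 2) = ‖WithLp.toLp 2 v‖ := by
  simp [EuclideanSpace.norm_eq]

lemma sqrt_sum_sq_sub_le_sqrt_sum_add_sq (x y : ι → ℝ) :
    √(∑ i, x i ^ 2) - √(∑ i, y i ^ 2) ≤ √(∑ i, (x i + y i) ^ 2) := by
  have := norm_sub_le_norm_add (WithLp.toLp 2 x) (WithLp.toLp 2 y)
  rwa [← WithLp.toLp_add, ← sqrt_sum_sq_eq_norm, ← sqrt_sum_sq_eq_norm,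
    ← sqrt_sum_sq_eq_norm] at this

lemma abs_le_sqrt_sum_sq (v : ι → ℝ) (j : ι) : |v j| ≤ √(∑ i, v i ^ 2) := by
  rw [← Real.sqrt_sq_eq_abs]
  exact Real.sqrt_le_sqrt (single_le_sum (fun i _ ↦ sq_nonneg (v i)) (mem_univ j))

lemma sqrt_sum_sq_eq_of_support_subset {v : ι → ℝ} {s : Finset ι} (hv : ∀ i ∉ s, v i = 0) :
    √(∑ i ∈ s, v i ^ 2) = √(∑ i, v i ^ 2) := by
  rw [sum_subset (subset_univ s) fun i _ hi ↦ by simp [hv i hi]]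

end SumOfSquares

lemma sum_mulVec_mul_eq_sum_mul_sum {m n : Type*} [Fintype m] [Fintype n]
    (Φ : Matrix m n ℝ) (a : n → ℝ) (u : m → ℝ) {Λ : Finset n} (ha : ∀ j ∉ Λ, a j = 0) :
    ∑ r, Φ.mulVec a r * u r = ∑ j ∈ Λ, a j * ∑ r, u r * Φ r j := by
  rw [sum_subset (subset_univ Λ) fun j _ hj ↦ by simp [ha j hj]]
  simp only [Matrix.mulVec, dotProduct, sum_mul, mul_sum]
  rw [sum_comm]
  exact sum_congr rfl fun j _ ↦ sum_congr rfl fun r _ ↦ by ring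

lemma abs_sum_mulVec_mul_le {m n : Type*} [Fintype m] [Fintype n]
    (Φ : Matrix m n ℝ) (a : n → ℝ) (u : m → ℝ) {Λ : Finset n} (ha : ∀ j ∉ Λ, a j = 0) :
    |∑ r, Φ.mulVec a r * u r| ≤ √(∑ j, a j ^ 2) * √(∑ j ∈ Λ, (∑ r, u r * Φ r j) ^ 2) := by
  rw [sum_mulVec_mul_eq_sum_mul_sum Φ a u ha, ← sqrt_sum_sq_eq_of_support_subset ha]
  exact abs_sum_mul_le_sqrt_mul_sqrt Λ a _

lemma sqrt_mul_sqrt_le_of_mul_le {m n : Type*} [Fintype m] [Fintype n] {δ : ℝ}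
    {v : n → ℝ} {u : m → ℝ} (h : (1 - δ) * ∑ i, v i ^ 2 ≤ ∑ r, u r ^ 2) :
    √(1 - δ) * √(∑ i, v i ^ 2) ≤ √(∑ r, u r ^ 2) := by
  rw [← Real.sqrt_mul' _ (sum_nonneg fun i _ ↦ sq_nonneg (v i))]
  exact Real.sqrt_le_sqrt h

lemma mul_add_lt_mul_of_div_lt {ν ε c m A t F : ℝ} (hν : 0 ≤ ν) (hε : 0 ≤ ε) (hc : 0 ≤ c)
    (hmA : m ≤ A) (hgap : ε < c * m) (ht : (ν * m + ε) / (c * m - ε) < t)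
    (hF : c * A - ε ≤ F) : ν * A + ε < t * F := by
  have hD : 0 < c * m - ε := by linarith
  have hm : 0 < m := pos_of_mul_pos_right (hε.trans_lt hgap) hc
  have ht' : ν * m + ε < t * (c * m - ε) := (div_lt_iff₀ hD).mp ht
  have ht0 : 0 < t := (div_nonneg (by positivity) hD.le).trans_lt ht
  have hslope : 0 < t * c - ν := by nlinarith
  nlinarith [mul_le_mul_of_nonneg_left hmA hslope.le, mul_le_mul_of_nonneg_left hF ht0.le]

theorem threshold_rejects_incorrect_atoms_general
    (n d k : ℕ)
    (Φ : Matrix (Fin n) (Fin d) ℝ)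
    (hcol : ∀ i : Fin d, ∑ r, Φ r i ^ 2 = 1)
    (δ ν : ℝ)
    (hδ : ∀ v : Fin d → ℝ, ({i | v i ≠ 0} : Set (Fin d)).ncard ≤ k →
        (1 - δ) * ∑ i, v i ^ 2 ≤ ∑ r, (Φ.mulVec v r) ^ 2 ∧
        ∑ r, (Φ.mulVec v r) ^ 2 ≤ (1 + δ) * ∑ i, v i ^ 2)
    (hν : ∀ (i : Fin d) (Λ' : Finset (Fin d)), i ∉ Λ' → Λ'.card ≤ k →
        Real.sqrt (∑ j ∈ Λ', (∑ r, Φ r i * Φ r j) ^ 2) ≤ ν)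
    (a : Fin d → ℝ) (Λ : Finset (Fin d))
    (hsupp : ∀ i, a i ≠ 0 ↔ i ∈ Λ) (hΛ : Λ.card = k)
    (amin : ℝ)
    (hmin_mem : ∃ i, a i ≠ 0 ∧ |a i| = amin)
    (w f : Fin n → ℝ) (ε : ℝ)
    (hw : Real.sqrt (∑ r, w r ^ 2) ≤ ε)
    (hf : f = Φ.mulVec a + w)
    (hnoise : ε < Real.sqrt (1 - δ) * amin)
    (t : ℝ)
    (ht : (ν * amin + ε) / (Real.sqrt (1 - δ) * amin - ε) < t) :
    ∀ i ∉ Λ, |∑ r, f r * Φ r i| < t * Real.sqrt (∑ r, f r ^ 2) := by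
  intro i hi
  have ha : ∀ j ∉ Λ, a j = 0 := fun j hj ↦ not_not.mp (mt (hsupp j).mp hj)
  have hε : 0 ≤ ε := (Real.sqrt_nonneg _).trans hw
  have hν0 : 0 ≤ ν := (Real.sqrt_nonneg _).trans (hν i ∅ (notMem_empty i) (by simp))
  have hmin : amin ≤ √(∑ j, a j ^ 2) := by
    obtain ⟨j, -, rfl⟩ := hmin_mem
    exact abs_le_sqrt_sum_sq a j
  have hsparse : ({j | a j ≠ 0} : Set (Fin d)).ncard ≤ k := by
    rw [show {j | a j ≠ 0} = (Λ : Set (Fin d)) by ext j; simp [hsupp], Set.ncard_coe_finset, hΛ]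
  have hnorm : √(1 - δ) * √(∑ j, a j ^ 2) - ε ≤ √(∑ r, f r ^ 2) := by
    have := sqrt_sum_sq_sub_le_sqrt_sum_add_sq (Φ.mulVec a) w
    simp only [hf, Pi.add_apply]
    linarith [sqrt_mul_sqrt_le_of_mul_le (hδ a hsparse).1]
  have hnoise_corr : |∑ r, w r * Φ r i| ≤ ε := by
    simpa only [hcol i, Real.sqrt_one, mul_one] using
      (abs_sum_mul_le_sqrt_mul_sqrt univ w (Φ · i)).trans (mul_le_mul_of_nonneg_right hw (by simp))
  have hcorr : |∑ r, f r * Φ r i| ≤ ν * √(∑ j, a j ^ 2) + ε := by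
    have hsignal := (abs_sum_mulVec_mul_le Φ a (Φ · i) ha).trans
      (mul_le_mul_of_nonneg_left (hν i Λ hi hΛ.le) (Real.sqrt_nonneg _))
    simp only [hf, Pi.add_apply, add_mul, sum_add_distrib]
    linarith [abs_add_le (∑ r, Φ.mulVec a r * Φ r i) (∑ r, w r * Φ r i)]
  exact hcorr.trans_lt (mul_add_lt_mul_of_div_lt hν0 hε (Real.sqrt_nonneg _) hmin hnoise ht hnorm)

/-- If f = Φa + w with a k-sparse, ‖w‖₂ ≤ ε, √(1−δ_k)|a_min| > ε, and
t > (ν_k|a_min| + ε)/(√(1−δ_k)|a_min| − ε), then |⟨f, φ_i⟩| < t‖f‖₂ for every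
i outside supp(a): thresholding never selects an incorrect atom. -/
theorem threshold_rejects_incorrect_atoms
    (n d k : ℕ)
    (Φ : Matrix (Fin n) (Fin d) ℝ)
    (hcol : ∀ i : Fin d, ∑ r, Φ r i ^ 2 = 1)
    (δ ν : ℝ) (hδ0 : 0 ≤ δ) (hδ1 : δ < 1)
    (hδ : ∀ v : Fin d → ℝ, ({i | v i ≠ 0} : Set (Fin d)).ncard ≤ k →
        (1 - δ) * ∑ i, v i ^ 2 ≤ ∑ r, (Φ.mulVec v r) ^ 2 ∧
        ∑ r, (Φ.mulVec v r) ^ 2 ≤ (1 + δ) * ∑ i, v i ^ 2)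
    (hν : ∀ (i : Fin d) (Λ' : Finset (Fin d)), i ∉ Λ' → Λ'.card ≤ k →
        Real.sqrt (∑ j ∈ Λ', (∑ r, Φ r i * Φ r j) ^ 2) ≤ ν)
    (a : Fin d → ℝ) (Λ : Finset (Fin d))
    (hsupp : ∀ i, a i ≠ 0 ↔ i ∈ Λ) (hΛ : Λ.card = k)
    (amin : ℝ)
    (hmin_mem : ∃ i, a i ≠ 0 ∧ |a i| = amin)
    (hmin_le : ∀ i, a i ≠ 0 → amin ≤ |a i|)
    (w f : Fin n → ℝ) (ε : ℝ) (hε : 0 ≤ ε)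
    (hw : Real.sqrt (∑ r, w r ^ 2) ≤ ε)
    (hf : f = Φ.mulVec a + w)
    (hnoise : ε < Real.sqrt (1 - δ) * amin)
    (t : ℝ)
    (ht : (ν * amin + ε) / (Real.sqrt (1 - δ) * amin - ε) < t) :
    ∀ i ∉ Λ, |∑ r, f r * Φ r i| < t * Real.sqrt (∑ r, f r ^ 2) :=
  threshold_rejects_incorrect_atoms_general n d k Φ hcol δ ν hδ hν a Λ hsupp hΛ amin hmin_mem w f ε
    hw hf hnoise t ht
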